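/- Let T ∈ ℕ and consider a deterministic array (p_t, r_t, c_t)_{t=0}^{T} with p_t ∈ ℝ^L_{++}, interest rates r_t > −1, and c_t ∈ ℝ^L_+ \ {0}, and set ρ_0 = p_0 and ρ_t = p_t / ∏_{i=1}^{t}(1+r_i) for t ≥ 1. The array is ED-rationalizable if and only if there exist a discount factor d ∈ (0,1] and scalars v_t > 0 for t ∈ {0,…,T} such that v_t − v_s ≥ d^{−t} ρ_tᵀ (c_t − c_s) for all t, s ∈ {0,…,T}. -/

import Mathlib

/-!
Sufficiency is Afriat's construction: the utility `u z = min_t (v_t + d^{-t} ρ_tᵀ (z - c_t))` is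
concave, continuous and strictly increasing, equals `v_t` at `c_t` by the Afriat inequalities, and
has supergradient `d^{-t} ρ_t` there; summing these supergradient inequalities with weights `d^t`
shows that `(c_t)` is optimal on the budget hyperplane.

Necessity: the discounted utility `U z = ∑ d^t u z_t` is concave and `c` maximises it on the budget
hyperplane, so comparing mixtures of cheaper and costlier streams yields a multiplier `μ` with
`U z - U c ≤ μ (ρᵀ z - ρᵀ c)` on the whole orthant. Local nonsatiation at a maximiser of `u` on a
compact budget set gives `μ > 0`. Changing a single period `t` from `c_t` to `c_s` gives
`μ ρ_tᵀ (c_t - c_s) ≤ d^t (u c_t - u c_s)`, so `v_t = u c_t / μ`, shifted to be positive, works.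
-/

open MeasureTheory Filter Topology Finset

noncomputable section

/-- Vectors in ℝ^L with the Euclidean norm. -/
abbrev Vec (L : ℕ) := EuclideanSpace ℝ (Fin L)

/-- Inner product (dot product) of two vectors. -/
def dotp {L : ℕ} (p c : Vec L) : ℝ := ∑ j, p j * c j

/-- Componentwise nonnegative vectors: the set ℝ^L_+. -/
def NonnegV {L : ℕ} (c : Vec L) : Prop := ∀ j, 0 ≤ c j

/-- The consumption space ℝ^L_+ \ {0}. -/
def ConsV {L : ℕ} (c : Vec L) : Prop := NonnegV c ∧ c ≠ 0

/-- Componentwise strictly positive vectors: the set ℝ^L_{++}. -/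
def PosV {L : ℕ} (p : Vec L) : Prop := ∀ j, 0 < p j

/-- Concavity of u on its domain ℝ^L_+. -/
def IsConcaveNN {L : ℕ} (u : Vec L → ℝ) : Prop :=
  ∀ c c' : Vec L, NonnegV c → NonnegV c' → ∀ a : ℝ, 0 ≤ a → a ≤ 1 →
    a * u c + (1 - a) * u c' ≤ u (a • c + (1 - a) • c')

/-- Local nonsatiation of u on its domain ℝ^L_+. -/
def LocallyNonsatiatedNN {L : ℕ} (u : Vec L → ℝ) : Prop :=
  ∀ c : Vec L, NonnegV c → ∀ ε : ℝ, 0 < ε →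
    ∃ c' : Vec L, NonnegV c' ∧ ‖c' - c‖ < ε ∧ u c < u c'

/-- Continuity of u on its domain ℝ^L_+. -/
def ContinuousNN {L : ℕ} (u : Vec L → ℝ) : Prop := ContinuousOn u {c | NonnegV c}

/-- A concave, locally nonsatiated, continuous utility function on ℝ^L_+. -/
def NiceUtility {L : ℕ} (u : Vec L → ℝ) : Prop :=
  IsConcaveNN u ∧ LocallyNonsatiatedNN u ∧ ContinuousNN u

/-- ξ is a supergradient of u at c: u(c') − u(c) ≤ ξᵀ(c'−c) for all c' ∈ ℝ^L_+ \ {0}. -/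
def Supergrad {L : ℕ} (u : Vec L → ℝ) (c ξ : Vec L) : Prop :=
  ∀ c' : Vec L, ConsV c' → u c' - u c ≤ dotp ξ (c' - c)

/-- The compounding factor ∏_{i=1}^{t} (1 + r_i). -/
def Dfac (r : ℕ → ℝ) (t : ℕ) : ℝ := ∏ i ∈ Finset.Icc 1 t, (1 + r i)

/-- Effective (discounted) prices ρ_t = p_t / ∏_{i=1}^{t}(1 + r_i); in particular ρ_0 = p_0. -/
def effP {L T : ℕ} (r : ℕ → ℝ) (p : Fin (T + 1) → Vec L) (t : Fin (T + 1)) : Vec L :=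
  (Dfac r (t : ℕ))⁻¹ • p t

/-- ED-rationalizability: there exist a nice utility u, a discount factor d ∈ (0,1],
incomes y_t > 0, and initial assets a₀ ≥ 0 such that (c_t) maximizes Σ_t d^t u(z_t)
over nonnegative streams satisfying the intertemporal budget constraint
Σ_t ρ_tᵀ z_t = Σ_{t=1}^{T} y_t / ∏_{i=1}^{t}(1+r_i) + a₀. -/
def EDRat {L T : ℕ} (r : ℕ → ℝ) (p c : Fin (T + 1) → Vec L) : Prop :=
  ∃ u : Vec L → ℝ, ∃ d : ℝ, ∃ y : Fin (T + 1) → ℝ, ∃ a₀ : ℝ,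
    NiceUtility u ∧ 0 < d ∧ d ≤ 1 ∧ (∀ t, 0 < y t) ∧ 0 ≤ a₀ ∧
    (∑ t : Fin (T + 1), dotp (effP r p t) (c t)) =
      (∑ t : Fin (T + 1), if t = 0 then 0 else y t / Dfac r (t : ℕ)) + a₀ ∧
    ∀ z : Fin (T + 1) → Vec L, (∀ t, NonnegV (z t)) →
      (∑ t : Fin (T + 1), dotp (effP r p t) (z t)) =
        (∑ t : Fin (T + 1), if t = 0 then 0 else y t / Dfac r (t : ℕ)) + a₀ →
      (∑ t : Fin (T + 1), d ^ (t : ℕ) * u (z t)) ≤ ∑ t : Fin (T + 1), d ^ (t : ℕ) * u (c t)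

open scoped InnerProductSpace

lemma dotp_eq_inner {L : ℕ} (p c : Vec L) : dotp p c = ⟪p, c⟫_ℝ := by
  simp [dotp, PiLp.inner_apply, mul_comm]

lemma dotp_sub {L : ℕ} (p x y : Vec L) : dotp p (x - y) = dotp p x - dotp p y := by
  simp only [dotp_eq_inner, inner_sub_right]

lemma continuous_dotp {L : ℕ} (p : Vec L) : Continuous (dotp p) := by
  rw [show dotp p = fun x => ⟪p, x⟫_ℝ from funext (dotp_eq_inner p)]
  fun_prop

lemma dotp_nonneg {L : ℕ} {p x : Vec L} (hp : PosV p) (hx : NonnegV x) : 0 ≤ dotp p x :=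
  sum_nonneg fun j _ => mul_nonneg (hp j).le (hx j)

lemma dotp_pos {L : ℕ} {p x : Vec L} (hp : PosV p) (hx : ConsV x) : 0 < dotp p x := by
  obtain ⟨j, hj⟩ : ∃ j, x j ≠ 0 := by
    by_contra! h
    exact hx.2 (by ext j; simpa using h j)
  exact sum_pos' (fun k _ => mul_nonneg (hp k).le (hx.1 k))
    ⟨j, mem_univ j, mul_pos (hp j) ((hx.1 j).lt_of_ne' hj)⟩

lemma convex_setOf_nonnegV {L : ℕ} : Convex ℝ {x : Vec L | NonnegV x} := by
  intro x hx y hy a b ha hb _ j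
  simpa using add_nonneg (mul_nonneg ha (hx j)) (mul_nonneg hb (hy j))

lemma isClosed_setOf_nonnegV {L : ℕ} : IsClosed {x : Vec L | NonnegV x} := by
  simpa only [NonnegV, Set.ofPred_forall] using
    isClosed_iInter fun j => isClosed_le continuous_const (PiLp.continuous_apply 2 _ j)

lemma isConcaveNN_iff_concaveOn {L : ℕ} {u : Vec L → ℝ} :
    IsConcaveNN u ↔ ConcaveOn ℝ {x | NonnegV x} u := by
  refine ⟨fun h => ⟨convex_setOf_nonnegV, fun x hx y hy a b ha hb hab => ?_⟩,
    fun h x y hx hy a ha0 ha1 => h.2 hx hy ha0 (sub_nonneg.2 ha1) (add_sub_cancel a 1)⟩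
  obtain rfl : b = 1 - a := by linarith
  exact h x y hx hy a ha (by linarith)

lemma isCompact_budgetSet {L : ℕ} {ρ : Vec L} (hρ : PosV ρ) (b : ℝ) :
    IsCompact {x : Vec L | NonnegV x ∧ dotp ρ x ≤ b} := by
  have hbox : IsCompact (EuclideanSpace.equiv (Fin L) ℝ ⁻¹' Set.Icc 0 fun j => b / ρ j) :=
    (EuclideanSpace.equiv (Fin L) ℝ).toHomeomorph.isCompact_preimage.2 isCompact_Icc
  refine hbox.of_isClosed_subset
    (isClosed_setOf_nonnegV.inter (isClosed_le (continuous_dotp ρ) continuous_const))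
    fun x ⟨hx, hxb⟩ => ⟨hx, fun j => ?_⟩
  rw [le_div_iff₀ (hρ j), mul_comm]
  exact ((single_le_sum (fun k _ => mul_nonneg (hρ k).le (hx k)) (mem_univ j)).trans hxb :)

/-- Apply local nonsatiation at a maximiser of `u` on the compact budget set of `x`. -/
lemma LocallyNonsatiatedNN.exists_dotp_lt_and_lt {L : ℕ} {u : Vec L → ℝ}
    (hlns : LocallyNonsatiatedNN u) (hcont : ContinuousNN u) {ρ x : Vec L} (hρ : PosV ρ)
    (hx : NonnegV x) : ∃ w, NonnegV w ∧ dotp ρ x < dotp ρ w ∧ u x < u w := by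
  obtain ⟨m, ⟨hm, -⟩, hmax⟩ := (isCompact_budgetSet hρ (dotp ρ x)).exists_isMaxOn
    ⟨x, hx, le_rfl⟩ (hcont.mono fun _ h => h.1)
  obtain ⟨w, hw, -, hmw⟩ := hlns m hm 1 one_pos
  refine ⟨w, hw, not_le.1 fun hwx => (hmw.trans_le (hmax ⟨hw, hwx⟩)).false, ?_⟩
  exact (hmax ⟨hx, le_rfl⟩).trans_lt hmw

lemma locallyNonsatiatedNN_of_lt_add_single {L : ℕ} {u : Vec L → ℝ} (j : Fin L)
    (h : ∀ z s, 0 < s → u z < u (z + EuclideanSpace.single j s)) : LocallyNonsatiatedNN u := by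
  intro z hz ε hε
  refine ⟨z + EuclideanSpace.single j (ε / 2), fun i => ?_, ?_, h z _ (half_pos hε)⟩
  · have := hz i
    simp only [PiLp.add_apply, PiLp.single_apply]
    split_ifs <;> linarith
  · rw [add_sub_cancel_left, PiLp.norm_single, Real.norm_of_nonneg (by positivity)]
    linarith

section Multiplier

variable {E : Type*} [AddCommGroup E] [Module ℝ E] {s : Set E} {U : E → ℝ} {f : E →ₗ[ℝ] ℝ}
  {c : E}

/-- The mixture of `z` and `w` costing exactly `f c` is no better than `c`. -/
lemma ConcaveOn.slope_le_slope_of_isMaxOn (hU : ConcaveOn ℝ s U)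
    (hmax : IsMaxOn U (s ∩ {z | f z = f c}) c) {z w : E} (hz : z ∈ s) (hw : w ∈ s)
    (hzc : f z < f c) (hcw : f c < f w) :
    (U w - U c) / (f w - f c) ≤ (U c - U z) / (f c - f z) := by
  have hD : 0 < f w - f z := by linarith
  obtain ⟨a, ha⟩ : ∃ a, a * (f w - f z) = f w - f c := ⟨_, div_mul_cancel₀ _ hD.ne'⟩
  obtain ⟨b, hb⟩ : ∃ b, b * (f w - f z) = f c - f z := ⟨_, div_mul_cancel₀ _ hD.ne'⟩
  have ha0 : 0 ≤ a := le_of_mul_le_mul_right (by linarith) hD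
  have hb0 : 0 ≤ b := le_of_mul_le_mul_right (by linarith) hD
  have hab : a + b = 1 := mul_right_cancel₀ hD.ne' (by linear_combination ha + hb)
  have hmix : f (a • z + b • w) = f c := by
    simp only [map_add, map_smul, smul_eq_mul]
    exact mul_right_cancel₀ hD.ne' (by linear_combination f z * ha + f w * hb)
  have hconc : a * U z + b * U w ≤ U c :=
    (hU.2 hz hw ha0 hb0 hab).trans (isMaxOn_iff.1 hmax _ ⟨hU.1 hz hw ha0 hb0 hab, hmix⟩)
  rw [div_le_div_iff₀ (by linarith) (by linarith), ← ha, ← hb]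
  linear_combination (f w - f z) * hconc - U c * (f w - f z) * hab

/-- The multiplier is the infimum of the slopes towards cheaper points. -/
lemma ConcaveOn.exists_multiplier_of_isMaxOn (hU : ConcaveOn ℝ s U)
    (hmax : IsMaxOn U (s ∩ {z | f z = f c}) c) (hlo : ∃ z ∈ s, f z < f c)
    (hhi : ∃ w ∈ s, f c < f w) : ∃ μ : ℝ, ∀ z ∈ s, U z - U c ≤ μ * (f z - f c) := by
  set slopes := (fun z => (U c - U z) / (f c - f z)) '' {z | z ∈ s ∧ f z < f c}
  have hne : slopes.Nonempty := Set.image_nonempty.2 hlo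
  have hbdd : BddBelow slopes := by
    obtain ⟨w, hw, hcw⟩ := hhi
    exact ⟨_, Set.forall_mem_image.2 fun z ⟨hz, hzc⟩ =>
      hU.slope_le_slope_of_isMaxOn hmax hz hw hzc hcw⟩
  refine ⟨sInf slopes, fun z hz => ?_⟩
  rcases lt_trichotomy (f z) (f c) with hzc | hzc | hcz
  · have := csInf_le hbdd (Set.mem_image_of_mem _ ⟨hz, hzc⟩)
    rw [le_div_iff₀ (sub_pos.2 hzc)] at this
    linarith
  · simpa [hzc] using isMaxOn_iff.1 hmax z ⟨hz, hzc⟩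
  · have := le_csInf hne (Set.forall_mem_image.2 fun w ⟨hw, hwc⟩ =>
      hU.slope_le_slope_of_isMaxOn hmax hw hz hwc hcz)
    rwa [div_le_iff₀ (sub_pos.2 hcz)] at this

lemma ConcaveOn.exists_pos_multiplier_of_isMaxOn (hU : ConcaveOn ℝ s U)
    (hmax : IsMaxOn U (s ∩ {z | f z = f c}) c) (hlo : ∃ z ∈ s, f z < f c)
    (hhi : ∃ w ∈ s, f c < f w ∧ U c < U w) :
    ∃ μ > 0, ∀ z ∈ s, U z - U c ≤ μ * (f z - f c) := by
  obtain ⟨w, hw, hcw, hUw⟩ := hhi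
  obtain ⟨μ, hμ⟩ := hU.exists_multiplier_of_isMaxOn hmax hlo ⟨w, hw, hcw⟩
  exact ⟨μ, pos_of_mul_pos_left ((sub_pos.2 hUw).trans_le (hμ w hw)) (sub_pos.2 hcw).le, hμ⟩

end Multiplier

lemma concaveOn_sum_mul_apply {ι E : Type*} [Fintype ι] [AddCommGroup E] [Module ℝ E]
    {s : Set E} {u : E → ℝ} (hu : ConcaveOn ℝ s u) {w : ι → ℝ} (hw : ∀ i, 0 ≤ w i) :
    ConcaveOn ℝ (Set.univ.pi fun _ => s) fun z => ∑ i, w i * u (z i) := by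
  refine ⟨convex_pi fun i _ => hu.1, fun x hx y hy a b ha hb hab => ?_⟩
  simp only [smul_eq_mul, mul_sum, ← sum_add_distrib]
  refine sum_le_sum fun i _ => ?_
  have := mul_le_mul_of_nonneg_left (hu.2 (hx i trivial) (hy i trivial) ha hb hab) (hw i)
  simp only [Pi.add_apply, Pi.smul_apply, smul_eq_mul] at this ⊢
  linarith

lemma concaveOn_finset_inf' {ι E : Type*} [AddCommGroup E] [Module ℝ E] {s : Set E}
    {S : Finset ι} (hS : S.Nonempty) {f : ι → E → ℝ} (hf : ∀ i, ConcaveOn ℝ s (f i)) :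
    ConcaveOn ℝ s fun x => S.inf' hS fun i => f i x := by
  refine ⟨(hf hS.choose).1, fun x hx y hy a b ha hb hab => le_inf' _ _ fun i hi => ?_⟩
  calc a • S.inf' hS (fun i => f i x) + b • S.inf' hS (fun i => f i y)
      ≤ a • f i x + b • f i y := by gcongr <;> exact inf'_le _ hi
    _ ≤ f i (a • x + b • y) := (hf i).2 hx hy ha hb hab

lemma Fintype.sum_update_sub {ι α M : Type*} [Fintype ι] [DecidableEq ι] [AddCommGroup M]
    (f : ι → α → M) (z : ι → α) (t : ι) (x : α) :
    ∑ i, f i (Function.update z t x i) - ∑ i, f i (z i) = f t x - f t (z t) := by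
  rw [← sum_sub_distrib, Fintype.sum_eq_single t fun i hi => by simp [hi]]
  simp

section Afriat

variable {ι E : Type*} [Fintype ι] [Nonempty ι] [NormedAddCommGroup E] [InnerProductSpace ℝ E]

def afriatUtility (v : ι → ℝ) (g c : ι → E) (z : E) : ℝ :=
  univ.inf' univ_nonempty fun t => v t + ⟪g t, z - c t⟫_ℝ

variable {v : ι → ℝ} {g c : ι → E}

lemma afriatUtility_le (t : ι) (z : E) : afriatUtility v g c z ≤ v t + ⟪g t, z - c t⟫_ℝ :=
  inf'_le _ (mem_univ t)

lemma afriatUtility_apply_eq (h : ∀ t s, v t - v s ≥ ⟪g t, c t - c s⟫_ℝ) (s : ι) :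
    afriatUtility v g c (c s) = v s := by
  refine le_antisymm (by simpa using afriatUtility_le (v := v) (g := g) (c := c) s (c s))
    (le_inf' _ _ fun t _ => ?_)
  have := h t s
  rw [← neg_sub, inner_neg_right]
  linarith

lemma concaveOn_afriatUtility : ConcaveOn ℝ Set.univ (afriatUtility v g c) := by
  refine concaveOn_finset_inf' univ_nonempty fun t => ?_
  have haff : (fun z => v t + ⟪g t, z - c t⟫_ℝ) = fun z => ⟪g t, z⟫_ℝ + (v t - ⟪g t, c t⟫_ℝ) := by
    ext z
    rw [inner_sub_right]
    ring
  rw [haff]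
  exact ((innerₛₗ ℝ (g t)).concaveOn convex_univ).add_const _

lemma continuous_afriatUtility : Continuous (afriatUtility v g c) :=
  Continuous.finset_inf'_apply _ fun t _ => by fun_prop

lemma afriatUtility_lt_add_single {L : ℕ} {g c : ι → Vec L} {j : Fin L}
    (hg : ∀ t, 0 < g t j) (z : Vec L) {s : ℝ} (hs : 0 < s) :
    afriatUtility v g c z < afriatUtility v g c (z + EuclideanSpace.single j s) := by
  refine (lt_inf'_iff _).2 fun t _ => (afriatUtility_le t z).trans_lt ?_
  have : 0 < s * g t j := mul_pos hs (hg t)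
  simp only [add_sub_right_comm z, inner_add_right, EuclideanSpace.inner_single_right]
  simpa using this

end Afriat

lemma Dfac_pos {T : ℕ} {r : ℕ → ℝ} (hr : ∀ i, 1 ≤ i → i ≤ T → -1 < r i) (t : Fin (T + 1)) :
    0 < Dfac r t :=
  prod_pos fun i hi => by
    have := hr i (mem_Icc.1 hi).1 ((mem_Icc.1 hi).2.trans (Nat.lt_succ_iff.1 t.isLt))
    linarith

lemma effP_pos {L T : ℕ} {r : ℕ → ℝ} (hr : ∀ i, 1 ≤ i → i ≤ T → -1 < r i)
    {p : Fin (T + 1) → Vec L} (hp : ∀ t, PosV (p t)) (t : Fin (T + 1)) : PosV (effP r p t) :=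
  fun j => mul_pos (inv_pos.2 (Dfac_pos hr t)) (hp t j)

lemma dotp_effP {L T : ℕ} (r : ℕ → ℝ) (p : Fin (T + 1) → Vec L) (t : Fin (T + 1)) (x : Vec L) :
    dotp (effP r p t) x = dotp (p t) x / Dfac r t := by
  simp only [dotp_eq_inner, effP, real_inner_smul_left]
  ring

/-- The budget identity for incomes `y_t = p_tᵀ c_t` and initial assets `a₀ = ρ_0ᵀ c_0`. -/
lemma sum_dotp_effP_eq {L T : ℕ} (r : ℕ → ℝ) (p c : Fin (T + 1) → Vec L) :
    ∑ t, dotp (effP r p t) (c t) =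
      (∑ t : Fin (T + 1), if t = 0 then 0 else dotp (p t) (c t) / Dfac r t) +
        dotp (effP r p 0) (c 0) := by
  simp [Fin.sum_univ_succ, Fin.succ_ne_zero, dotp_effP, add_comm]

lemma exists_pos_sub_ge_of_le_mul_sub {ι : Type*} [Finite ι] {k w : ι → ℝ} {a : ι → ι → ℝ}
    {μ : ℝ} (hk : ∀ t, 0 < k t) (hμ : 0 < μ) (h : ∀ t s, μ * a t s ≤ k t * (w t - w s)) :
    ∃ v : ι → ℝ, (∀ t, 0 < v t) ∧ ∀ t s, v t - v s ≥ (k t)⁻¹ * a t s := by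
  obtain ⟨m, hm⟩ := (Set.finite_range w).bddBelow
  refine ⟨fun t => (w t - m) / μ + 1, fun t => ?_, fun t s => ?_⟩
  · have := div_nonneg (sub_nonneg.2 (hm ⟨t, rfl⟩)) hμ.le
    linarith
  · rw [add_sub_add_right_eq_sub, ← sub_div, sub_sub_sub_cancel_right, ge_iff_le,
      le_div_iff₀ hμ]
    have hkt := hk t
    calc (k t)⁻¹ * a t s * μ = (k t)⁻¹ * (μ * a t s) := by ring
      _ ≤ (k t)⁻¹ * (k t * (w t - w s)) := mul_le_mul_of_nonneg_left (h t s) (by positivity)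
      _ = w t - w s := by field_simp

theorem EDRat.of_afriat {L T : ℕ} {p c : Fin (T + 1) → Vec L} {r : ℕ → ℝ}
    (hr : ∀ i, 1 ≤ i → i ≤ T → -1 < r i) (hp : ∀ t, PosV (p t)) (hc : ∀ t, ConsV (c t))
    {d : ℝ} (hd0 : 0 < d) (hd1 : d ≤ 1) {v : Fin (T + 1) → ℝ}
    (hv : ∀ t s, v t - v s ≥ (d ^ (t : ℕ))⁻¹ * dotp (effP r p t) (c t - c s)) :
    EDRat r p c := by
  obtain ⟨j⟩ : Nonempty (Fin L) := by
    by_contra! h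
    exact (hc 0).2 (Subsingleton.elim _ _)
  set g : Fin (T + 1) → Vec L := fun t => (d ^ (t : ℕ))⁻¹ • effP r p t
  have hafriat : ∀ t s, v t - v s ≥ ⟪g t, c t - c s⟫_ℝ := by
    simpa only [g, real_inner_smul_left, ← dotp_eq_inner] using hv
  have hg : ∀ t, 0 < g t j := fun t => mul_pos (inv_pos.2 (pow_pos hd0 _)) (effP_pos hr hp t j)
  have hu : NiceUtility (afriatUtility v g c) :=
    ⟨isConcaveNN_iff_concaveOn.2
      (concaveOn_afriatUtility.subset (Set.subset_univ _) convex_setOf_nonnegV),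
     locallyNonsatiatedNN_of_lt_add_single j fun z _ hs => afriatUtility_lt_add_single hg z hs,
     continuous_afriatUtility.continuousOn⟩
  refine ⟨afriatUtility v g c, d, fun t => dotp (p t) (c t), dotp (effP r p 0) (c 0), hu, hd0, hd1,
    fun t => dotp_pos (hp t) (hc t), dotp_nonneg (effP_pos hr hp 0) (hc 0).1,
    sum_dotp_effP_eq r p c, fun z _ hz => ?_⟩
  rw [← sum_dotp_effP_eq] at hz
  calc ∑ t : Fin (T + 1), d ^ (t : ℕ) * afriatUtility v g c (z t)
      ≤ ∑ t : Fin (T + 1), d ^ (t : ℕ) * (v t + ⟪g t, z t - c t⟫_ℝ) :=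
        sum_le_sum fun t _ => mul_le_mul_of_nonneg_left (afriatUtility_le t _) (by positivity)
    _ = ∑ t : Fin (T + 1), d ^ (t : ℕ) * v t +
          (∑ t, dotp (effP r p t) (z t) - ∑ t, dotp (effP r p t) (c t)) := by
        rw [← sum_sub_distrib, ← sum_add_distrib]
        refine sum_congr rfl fun t _ => ?_
        have : d ^ (t : ℕ) ≠ 0 := by positivity
        simp only [g, dotp_eq_inner, real_inner_smul_left, inner_sub_right]
        field_simp
    _ = ∑ t : Fin (T + 1), d ^ (t : ℕ) * afriatUtility v g c (c t) := by
        simp only [hz, sub_self, add_zero, afriatUtility_apply_eq hafriat]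

theorem EDRat.exists_multiplier {L T : ℕ} {p c : Fin (T + 1) → Vec L} {r : ℕ → ℝ}
    (hr : ∀ i, 1 ≤ i → i ≤ T → -1 < r i) (hp : ∀ t, PosV (p t)) (hc : ∀ t, ConsV (c t))
    (h : EDRat r p c) :
    ∃ d : ℝ, 0 < d ∧ d ≤ 1 ∧ ∃ u : Vec L → ℝ, ∃ μ > 0, ∀ t s,
      μ * dotp (effP r p t) (c t - c s) ≤ d ^ (t : ℕ) * (u (c t) - u (c s)) := by
  obtain ⟨u, d, y, a₀, ⟨hconc, hlns, hcont⟩, hd0, hd1, -, -, hbud, hopt⟩ := h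
  set ρ := effP r p
  set S : Set (Fin (T + 1) → Vec L) := Set.univ.pi fun _ => {x | NonnegV x}
  let cost : (Fin (T + 1) → Vec L) →ₗ[ℝ] ℝ := ∑ t, (innerₛₗ ℝ (ρ t)).comp (LinearMap.proj t)
  have hcost : ∀ z, cost z = ∑ t, dotp (ρ t) (z t) := fun z => by simp [cost, dotp_eq_inner]
  set U : (Fin (T + 1) → Vec L) → ℝ := fun z => ∑ t : Fin (T + 1), d ^ (t : ℕ) * u (z t)
  have hU : ConcaveOn ℝ S U :=
    concaveOn_sum_mul_apply (isConcaveNN_iff_concaveOn.1 hconc) fun t => by positivity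
  have hmax : IsMaxOn U (S ∩ {z | cost z = cost c}) c := isMaxOn_iff.2 fun z ⟨hz, hzc⟩ =>
    hopt z (fun t => hz t trivial) (by rw [← hcost, hzc, hcost, hbud])
  have hS : ∀ t x, NonnegV x → Function.update c t x ∈ S := fun t x hx τ _ => by
    rcases eq_or_ne τ t with rfl | hτ
    · simpa using hx
    · simpa [hτ] using (hc τ).1
  have hcost_update : ∀ t x,
      cost (Function.update c t x) - cost c = dotp (ρ t) x - dotp (ρ t) (c t) := fun t x => by
    rw [hcost, hcost, Fintype.sum_update_sub (fun t => dotp (ρ t))]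
  have hU_update : ∀ t x, U (Function.update c t x) - U c = d ^ (t : ℕ) * (u x - u (c t)) :=
    fun t x => by
      rw [Fintype.sum_update_sub (fun (t : Fin (T + 1)) x => d ^ (t : ℕ) * u x), mul_sub]
  have hlo : ∃ z ∈ S, cost z < cost c := by
    refine ⟨0, fun t _ j => le_rfl, ?_⟩
    rw [map_zero, hcost]
    exact sum_pos (fun t _ => dotp_pos (effP_pos hr hp t) (hc t)) univ_nonempty
  have hhi : ∃ w ∈ S, cost c < cost w ∧ U c < U w := by
    obtain ⟨w, hw, hcw, huw⟩ := hlns.exists_dotp_lt_and_lt hcont (effP_pos hr hp 0) (hc 0).1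
    refine ⟨_, hS 0 w hw, ?_, ?_⟩
    · linarith [hcost_update 0 w]
    · have := hU_update 0 w
      rw [Fin.val_zero, pow_zero, one_mul] at this
      linarith
  obtain ⟨μ, hμ0, hμ⟩ := hU.exists_pos_multiplier_of_isMaxOn hmax hlo hhi
  refine ⟨d, hd0, hd1, u, μ, hμ0, fun t s => ?_⟩
  have := hμ _ (hS t (c s) (hc s).1)
  rw [hU_update, hcost_update] at this
  rw [dotp_sub]
  linarith

/-- the array (p_t, r_t, c_t) is ED-rationalizable iff there exist a discount
factor d ∈ (0,1] and scalars v_t > 0 such that v_t − v_s ≥ d^{−t} ρ_tᵀ (c_t − c_s)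
for all t, s. -/
theorem stmt_3 {L T : ℕ} (p c : Fin (T + 1) → Vec L) (r : ℕ → ℝ)
    (hr : ∀ i, 1 ≤ i → i ≤ T → -1 < r i)
    (hp : ∀ t, PosV (p t)) (hc : ∀ t, ConsV (c t)) :
    EDRat r p c ↔
      ∃ d : ℝ, 0 < d ∧ d ≤ 1 ∧ ∃ v : Fin (T + 1) → ℝ, (∀ t, 0 < v t) ∧
        ∀ t s, v t - v s ≥ (d ^ (t : ℕ))⁻¹ * dotp (effP r p t) (c t - c s) := by
  constructor
  · intro h
    obtain ⟨d, hd0, hd1, u, μ, hμ, hmul⟩ := h.exists_multiplier hr hp hc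
    exact ⟨d, hd0, hd1, exists_pos_sub_ge_of_le_mul_sub (fun t => pow_pos hd0 _) hμ hmul⟩
  · rintro ⟨d, hd0, hd1, v, -, hv⟩
    exact .of_afriat hr hp hc hd0 hd1 hv

end
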